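/- Let t₀ < t₁, let f, g : ℝ×ℝ×ℝ → ℝ be continuous, h : ℝ → ℝ continuous on [t₀,t₁], φ : ℝ×ℝ → ℝ continuously differentiable with φ(t₀,0) = φ(t₁,0) = 0, and let η ≥ 0. Suppose (i) f(x,y,z) − η·g(x,y,z) + Dφ(x,y,z) ≥ h(x) for every x ∈ [t₀,t₁] and all y, z ∈ ℝ, and (ii) ∫_{t₀}^{t₁} h(x) dx ≥ 0. Then every continuously differentiable u : ℝ → ℝ with u(t₀) = u(t₁) = 0 that satisfies the integral constraint ∫_{t₀}^{t₁} g(x, u(x), u'(x)) dx ≥ 0 also satisfies ∫_{t₀}^{t₁} f(x, u(x), u'(x)) dx ≥ 0. -/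

import Mathlib

/-!
Integrate the pointwise inequality along the curve `x ↦ (x, u x, u' x)`. By the chain rule
`Dφ(x, u, u')` is the derivative of `x ↦ φ(x, u x)`, so its integral is
`φ(t₁, 0) - φ(t₀, 0) = 0`; what remains is `∫ h + η ∫ g(x, u, u') ≥ 0`.
-/

open MeasureTheory Set

/-- The paper's `Dφ`. -/
noncomputable def totalDeriv (φ : ℝ → ℝ → ℝ) (x y z : ℝ) : ℝ :=
  deriv (fun s => φ s y) x + deriv (fun t => φ x t) y * z

theorem Continuous.comp_jet {F : ℝ → ℝ → ℝ → ℝ}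
    (hF : Continuous fun p : ℝ × ℝ × ℝ => F p.1 p.2.1 p.2.2) {u : ℝ → ℝ}
    (hu : ContDiff ℝ 1 u) : Continuous fun x => F x (u x) (deriv u x) :=
  hF.comp (continuous_id.prodMk (hu.continuous.prodMk (hu.continuous_deriv le_rfl)))

section TotalDeriv

variable {φ : ℝ → ℝ → ℝ}

theorem totalDeriv_eq_fderiv {x y : ℝ}
    (hφ : DifferentiableAt ℝ (fun p : ℝ × ℝ => φ p.1 p.2) (x, y)) (z : ℝ) :
    totalDeriv φ x y z = fderiv ℝ (fun p : ℝ × ℝ => φ p.1 p.2) (x, y) (1, z) := by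
  set L := fderiv ℝ (fun p : ℝ × ℝ => φ p.1 p.2) (x, y)
  have hx : HasDerivAt (fun s => φ s y) (L (1, 0)) x := by
    have := hφ.hasFDerivAt.comp_hasDerivAt x ((hasDerivAt_id x).prodMk (hasDerivAt_const x y))
    exact this
  have hy : HasDerivAt (fun t => φ x t) (L (0, 1)) y := by
    have := hφ.hasFDerivAt.comp_hasDerivAt y ((hasDerivAt_const y x).prodMk (hasDerivAt_id y))
    exact this
  have hsplit : ((1 : ℝ), z) = (1, 0) + z • ((0 : ℝ), (1 : ℝ)) := by simp
  rw [totalDeriv, hx.deriv, hy.deriv, hsplit, map_add, map_smul, smul_eq_mul, mul_comm]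

theorem continuous_totalDeriv (hφ : ContDiff ℝ 1 fun p : ℝ × ℝ => φ p.1 p.2) :
    Continuous fun p : ℝ × ℝ × ℝ => totalDeriv φ p.1 p.2.1 p.2.2 := by
  simp_rw [totalDeriv_eq_fderiv (hφ.differentiable one_ne_zero _)]
  exact ((hφ.continuous_fderiv one_ne_zero).comp (continuous_fst.prodMk
    (continuous_fst.comp continuous_snd))).clm_apply
    (continuous_const.prodMk (continuous_snd.comp continuous_snd))

theorem hasDerivAt_comp_graph {u : ℝ → ℝ} {x : ℝ}
    (hφ : DifferentiableAt ℝ (fun p : ℝ × ℝ => φ p.1 p.2) (x, u x))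
    (hu : DifferentiableAt ℝ u x) :
    HasDerivAt (fun s => φ s (u s)) (totalDeriv φ x (u x) (deriv u x)) x := by
  rw [totalDeriv_eq_fderiv hφ]
  exact hφ.hasFDerivAt.comp_hasDerivAt x ((hasDerivAt_id x).prodMk hu.hasDerivAt)

theorem integral_totalDeriv_comp_jet
    (hφ : ContDiff ℝ 1 fun p : ℝ × ℝ => φ p.1 p.2) {u : ℝ → ℝ} (hu : ContDiff ℝ 1 u)
    (a b : ℝ) :
    ∫ x in a..b, totalDeriv φ x (u x) (deriv u x) = φ b (u b) - φ a (u a) :=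
  intervalIntegral.integral_eq_sub_of_hasDerivAt
    (fun x _ => hasDerivAt_comp_graph (hφ.differentiable one_ne_zero _)
      (hu.differentiable one_ne_zero x))
    (((continuous_totalDeriv hφ).comp_jet hu).intervalIntegrable a b)

end TotalDeriv

theorem stmt_2
    (t₀ t₁ : ℝ) (ht : t₀ < t₁)
    (f g : ℝ → ℝ → ℝ → ℝ)
    (hf : Continuous fun p : ℝ × ℝ × ℝ => f p.1 p.2.1 p.2.2)
    (hg : Continuous fun p : ℝ × ℝ × ℝ => g p.1 p.2.1 p.2.2)
    (h : ℝ → ℝ) (hh : ContinuousOn h (Icc t₀ t₁))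
    (φ : ℝ → ℝ → ℝ) (hφ : ContDiff ℝ 1 fun p : ℝ × ℝ => φ p.1 p.2)
    (hφ0 : φ t₀ 0 = 0) (hφ1 : φ t₁ 0 = 0)
    (η : ℝ) (hη : 0 ≤ η)
    (hpoint : ∀ x ∈ Icc t₀ t₁, ∀ y z : ℝ,
      f x y z - η * g x y z + deriv (fun s => φ s y) x + deriv (fun t => φ x t) y * z ≥ h x)
    (hint : (0:ℝ) ≤ ∫ x in t₀..t₁, h x)
    (u : ℝ → ℝ) (hu : ContDiff ℝ 1 u) (hu0 : u t₀ = 0) (hu1 : u t₁ = 0)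
    (hcon : (0:ℝ) ≤ ∫ x in t₀..t₁, g x (u x) (deriv u x)) :
    (0:ℝ) ≤ ∫ x in t₀..t₁, f x (u x) (deriv u x) := by
  set G := fun x => g x (u x) (deriv u x)
  set P := fun x => totalDeriv φ x (u x) (deriv u x)
  have hhi : IntervalIntegrable h volume t₀ t₁ := hh.intervalIntegrable_of_Icc ht.le
  have hGi : IntervalIntegrable G volume t₀ t₁ := (hg.comp_jet hu).intervalIntegrable _ _
  have hPi : IntervalIntegrable P volume t₀ t₁ :=
    ((continuous_totalDeriv hφ).comp_jet hu).intervalIntegrable _ _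
  have hP : ∫ x in t₀..t₁, P x = 0 := by
    rw [integral_totalDeriv_comp_jet hφ hu, hu0, hu1, hφ0, hφ1, sub_zero]
  calc (0 : ℝ)
      ≤ (∫ x in t₀..t₁, h x) + η * (∫ x in t₀..t₁, G x) - ∫ x in t₀..t₁, P x := by
        rw [hP, sub_zero]; exact add_nonneg hint (mul_nonneg hη hcon)
    _ = ∫ x in t₀..t₁, h x + η * G x - P x := by
        rw [intervalIntegral.integral_sub (hhi.add (hGi.const_mul η)) hPi,
          intervalIntegral.integral_add hhi (hGi.const_mul η), intervalIntegral.integral_const_mul]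
    _ ≤ ∫ x in t₀..t₁, f x (u x) (deriv u x) :=
        intervalIntegral.integral_mono_on ht.le ((hhi.add (hGi.const_mul η)).sub hPi)
          ((hf.comp_jet hu).intervalIntegrable _ _)
          fun x hx => by
            have := hpoint x hx (u x) (deriv u x)
            simp only [G, P, totalDeriv]
            linarith
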